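/- Let X be an infinite-dimensional Banach space admitting an inevitable biorthogonal system {A_j}, {A_j*} with constant 0 < δ < 1/2, and let ε > 0. Then |||x||| := ε‖x‖ + sup{|⟨x*, x⟩| : x* ∈ A_1*} defines an equivalent norm on X (indeed ε‖x‖ ≤ |||x||| ≤ (1 + ε)‖x‖ for all x), and for every infinite-dimensional closed subspace Y of X one has sup{|||x|||/|||y||| : x, y ∈ Y, ‖x‖ = ‖y‖ = 1} ≥ (1 + ε − δ)/(ε + δ). In particular the norm of X is λ-distortable with λ = (1 + ε − δ)/(ε + δ). -/

import Mathlib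

/-!
A vector `a ∈ A₁` has some `x* ∈ A₁*` with `Re⟨x*, a⟩ ≥ 1 - δ`, so `|||a||| ≥ 1 + ε - δ`,
while every functional of `A₁*` is at most `δ` in modulus on `A₂`, so `|||b||| ≤ ε + δ` for
`b ∈ A₂`. An infinite-dimensional closed subspace contains unit vectors arbitrarily close to
both sets by inevitability, and `|||·|||` is Lipschitz, so the ratio of its values at such
vectors approaches `(1 + ε - δ) / (ε + δ)`.
-/

noncomputable section

/-- A subset `A` of (the unit sphere of) `X` is inevitable: every
infinite-dimensional closed subspace of `X` comes arbitrarily close to `A`. -/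
def Inevitable {X : Type*} [NormedAddCommGroup X] [NormedSpace ℂ X] (A : Set X) : Prop :=
  ∀ H : Submodule ℂ X, IsClosed (H : Set X) → ¬ FiniteDimensional ℂ H →
    ∀ ε : ℝ, 0 < ε → ∃ h ∈ H, ∃ a ∈ A, ‖h - a‖ < ε

/-- `N : X → ℝ` is a norm on the complex normed space `X`. -/
def IsNormOn {X : Type*} [NormedAddCommGroup X] [NormedSpace ℂ X] (N : X → ℝ) : Prop :=
  (∀ x, 0 ≤ N x) ∧ (∀ x, N x = 0 → x = 0) ∧
  (∀ (c : ℂ) (x : X), N (c • x) = ‖c‖ * N x) ∧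
  (∀ x y, N (x + y) ≤ N x + N y)

/-- The norm of `X` is `lam`-distortable: there is an equivalent norm `N` such
that on the unit sphere of every infinite-dimensional closed subspace `Y`,
`sup N x / N y ≥ lam`. -/
def Distortable (X : Type*) [NormedAddCommGroup X] [NormedSpace ℂ X] (lam : ℝ) : Prop :=
  ∃ N : X → ℝ, IsNormOn N ∧
    (∃ c > (0 : ℝ), ∃ C > (0 : ℝ), ∀ x, c * ‖x‖ ≤ N x ∧ N x ≤ C * ‖x‖) ∧
    ∀ Y : Submodule ℂ X, IsClosed (Y : Set X) → ¬ FiniteDimensional ℂ Y →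
      lam ≤ sSup {r : ℝ | ∃ x ∈ Y, ∃ y ∈ Y, ‖x‖ = 1 ∧ ‖y‖ = 1 ∧ r = N x / N y}

/-- The renorming `|||x||| = ε‖x‖ + sup { |⟨f, x⟩| : f ∈ B1 }`. -/
def triNorm {X : Type*} [NormedAddCommGroup X] [NormedSpace ℂ X]
    (B1 : Set (X →L[ℂ] ℂ)) (ε : ℝ) (x : X) : ℝ :=
  ε * ‖x‖ + sSup ((fun f : X →L[ℂ] ℂ => ‖f x‖) '' B1)

section

open Metric Filter Topology Pointwise

variable {X : Type*} [NormedAddCommGroup X] [NormedSpace ℂ X]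

def dualSup (B1 : Set (X →L[ℂ] ℂ)) (x : X) : ℝ :=
  sSup ((fun f : X →L[ℂ] ℂ => ‖f x‖) '' B1)

def sphereRatios (N : X → ℝ) (Y : Submodule ℂ X) : Set ℝ :=
  {r : ℝ | ∃ x ∈ Y, ∃ y ∈ Y, ‖x‖ = 1 ∧ ‖y‖ = 1 ∧ r = N x / N y}

section dualSup

variable {B1 : Set (X →L[ℂ] ℂ)}

theorem dualSup_nonneg (x : X) : 0 ≤ dualSup B1 x :=
  Real.sSup_nonneg <| by rintro r ⟨f, -, rfl⟩; positivity

theorem dualSup_le {x : X} {c : ℝ} (hc : 0 ≤ c) (h : ∀ f ∈ B1, ‖f x‖ ≤ c) :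
    dualSup B1 x ≤ c :=
  Real.sSup_le (by rintro r ⟨f, hf, rfl⟩; exact h f hf) hc

theorem norm_apply_le_norm_of_mem (hB1 : B1 ⊆ closedBall 0 1) {f : X →L[ℂ] ℂ} (hf : f ∈ B1)
    (x : X) : ‖f x‖ ≤ ‖x‖ :=
  f.le_of_opNorm_le (mem_closedBall_zero_iff.mp (hB1 hf)) x |>.trans_eq (one_mul _)

theorem dualSup_le_norm (hB1 : B1 ⊆ closedBall 0 1) (x : X) : dualSup B1 x ≤ ‖x‖ :=
  dualSup_le (norm_nonneg x) fun _ hf => norm_apply_le_norm_of_mem hB1 hf x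

theorem norm_apply_le_dualSup (hB1 : B1 ⊆ closedBall 0 1) {f : X →L[ℂ] ℂ} (hf : f ∈ B1)
    (x : X) : ‖f x‖ ≤ dualSup B1 x :=
  le_csSup ⟨‖x‖, by rintro r ⟨g, hg, rfl⟩; exact norm_apply_le_norm_of_mem hB1 hg x⟩
    ⟨f, hf, rfl⟩

theorem dualSup_add_le (hB1 : B1 ⊆ closedBall 0 1) (x y : X) :
    dualSup B1 (x + y) ≤ dualSup B1 x + dualSup B1 y :=
  dualSup_le (add_nonneg (dualSup_nonneg x) (dualSup_nonneg y)) fun f hf =>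
    calc ‖f (x + y)‖ ≤ ‖f x‖ + ‖f y‖ := by rw [map_add]; exact norm_add_le _ _
      _ ≤ dualSup B1 x + dualSup B1 y :=
        add_le_add (norm_apply_le_dualSup hB1 hf x) (norm_apply_le_dualSup hB1 hf y)

theorem dualSup_smul (c : ℂ) (x : X) : dualSup B1 (c • x) = ‖c‖ * dualSup B1 x := by
  have : (fun f : X →L[ℂ] ℂ => ‖f (c • x)‖) '' B1 = ‖c‖ • (fun f => ‖f x‖) '' B1 := by
    rw [← Set.image_smul, ← Set.image_comp]
    simp
  rw [dualSup, this, Real.sSup_smul_of_nonneg (norm_nonneg c), smul_eq_mul, dualSup]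

end dualSup

section triNorm

variable {B1 : Set (X →L[ℂ] ℂ)} {ε : ℝ}

theorem triNorm_eq (x : X) : triNorm B1 ε x = ε * ‖x‖ + dualSup B1 x := rfl

theorem mul_norm_le_triNorm (x : X) : ε * ‖x‖ ≤ triNorm B1 ε x :=
  le_add_of_nonneg_right (dualSup_nonneg x)

theorem triNorm_le (hB1 : B1 ⊆ closedBall 0 1) (x : X) :
    triNorm B1 ε x ≤ (1 + ε) * ‖x‖ := by
  linarith [dualSup_le_norm hB1 x, triNorm_eq (B1 := B1) (ε := ε) x]

theorem add_re_le_triNorm (hB1 : B1 ⊆ closedBall 0 1) {f : X →L[ℂ] ℂ} (hf : f ∈ B1)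
    (x : X) : ε * ‖x‖ + (f x).re ≤ triNorm B1 ε x :=
  add_le_add_right ((Complex.re_le_norm _).trans (norm_apply_le_dualSup hB1 hf x)) _

theorem triNorm_le_of_forall_norm_apply_le {x : X} {c : ℝ} (hc : 0 ≤ c)
    (h : ∀ f ∈ B1, ‖f x‖ ≤ c) : triNorm B1 ε x ≤ ε * ‖x‖ + c :=
  add_le_add_right (dualSup_le hc h) _

theorem isNormOn_triNorm (hB1 : B1 ⊆ closedBall 0 1) (hε : 0 < ε) :
    IsNormOn (triNorm B1 ε) := by
  refine ⟨fun x => (mul_nonneg hε.le (norm_nonneg x)).trans (mul_norm_le_triNorm x),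
    fun x hx => ?_, fun c x => ?_, fun x y => ?_⟩
  · have := mul_norm_le_triNorm (B1 := B1) (ε := ε) x
    rw [hx] at this
    exact norm_le_zero_iff.mp (nonpos_of_mul_nonpos_right this hε)
  · rw [triNorm_eq, triNorm_eq, dualSup_smul, norm_smul]
    ring
  · simp only [triNorm_eq]
    nlinarith [norm_add_le x y, dualSup_add_le hB1 x y]

end triNorm

theorem IsNormOn.le_add_mul_norm_sub {N : X → ℝ} {C : ℝ} (hN : IsNormOn N)
    (hC : ∀ x, N x ≤ C * ‖x‖) (u v : X) : N u ≤ N v + C * ‖u - v‖ :=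
  calc N u = N (v + (u - v)) := by rw [add_sub_cancel]
    _ ≤ N v + N (u - v) := hN.2.2.2 v (u - v)
    _ ≤ N v + C * ‖u - v‖ := add_le_add_right (hC _) _

theorem IsNormOn.uniformContinuous {N : X → ℝ} {C : ℝ} (hN : IsNormOn N)
    (hC : ∀ x, N x ≤ C * ‖x‖) : UniformContinuous N :=
  (LipschitzWith.of_le_add_mul' C fun u v => by
    simpa [dist_eq_norm] using hN.le_add_mul_norm_sub hC u v).uniformContinuous

theorem exists_norm_eq_one_norm_sub_le {Y : Submodule ℂ X} {h a : X} (hh : h ∈ Y) (h0 : h ≠ 0)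
    (ha : ‖a‖ = 1) : ∃ x ∈ Y, ‖x‖ = 1 ∧ ‖x - a‖ ≤ 2 * ‖h - a‖ := by
  set x := (‖h‖⁻¹ : ℂ) • h
  have hx : ‖x‖ = 1 := norm_smul_inv_norm h0
  have hxh : ‖x - h‖ ≤ ‖h - a‖ :=
    calc ‖x - h‖ = ‖((1 - ‖h‖ : ℝ) : ℂ) • x‖ := by
          rw [Complex.ofReal_sub, Complex.ofReal_one, sub_smul, one_smul,
            smul_inv_smul₀ (by simpa using h0)]
      _ = |‖a‖ - ‖h‖| := by
          rw [norm_smul, hx, mul_one, Complex.norm_real, Real.norm_eq_abs, ha]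
      _ ≤ ‖h - a‖ := by rw [abs_sub_comm]; exact abs_norm_sub_norm_le h a
  refine ⟨x, Y.smul_mem _ hh, hx, ?_⟩
  calc ‖x - a‖ ≤ ‖x - h‖ + ‖h - a‖ := norm_sub_le_norm_sub_add_norm_sub x h a
    _ ≤ 2 * ‖h - a‖ := by linarith

theorem Inevitable.exists_norm_eq_one_norm_sub_lt {A : Set X} (hinev : Inevitable A)
    (hA : A ⊆ sphere 0 1) {Y : Submodule ℂ X} (hYc : IsClosed (Y : Set X))
    (hYfd : ¬ FiniteDimensional ℂ Y) {γ : ℝ} (hγ : 0 < γ) :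
    ∃ x ∈ Y, ‖x‖ = 1 ∧ ∃ a ∈ A, ‖x - a‖ < γ := by
  -- the cap `1` keeps `h` away from `0`, as `‖0 - a‖ = 1`
  obtain ⟨h, hh, a, haA, hha⟩ := hinev Y hYc hYfd (min (γ / 2) 1) (by positivity)
  have ha : ‖a‖ = 1 := mem_sphere_zero_iff_norm.mp (hA haA)
  have h0 : h ≠ 0 := by
    rintro rfl
    simp only [zero_sub, norm_neg, ha] at hha
    exact (min_le_right _ _).not_gt hha
  obtain ⟨x, hxY, hx, hxa⟩ := exists_norm_eq_one_norm_sub_le hh h0 ha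
  exact ⟨x, hxY, hx, a, haA, by linarith [min_le_left (γ / 2) 1]⟩

theorem Inevitable.exists_norm_eq_one_dist_lt {A : Set X} (hinev : Inevitable A)
    (hA : A ⊆ sphere 0 1) {Y : Submodule ℂ X} (hYc : IsClosed (Y : Set X))
    (hYfd : ¬ FiniteDimensional ℂ Y) {N : X → ℝ} (hN : UniformContinuous N) {γ : ℝ}
    (hγ : 0 < γ) : ∃ x ∈ Y, ‖x‖ = 1 ∧ ∃ a ∈ A, dist (N x) (N a) < γ := by
  obtain ⟨η, hη, hNη⟩ := Metric.uniformContinuous_iff.mp hN γ hγ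
  obtain ⟨x, hxY, hx, a, haA, hxa⟩ := hinev.exists_norm_eq_one_norm_sub_lt hA hYc hYfd hη
  exact ⟨x, hxY, hx, a, haA, hNη (by rwa [dist_eq_norm])⟩

theorem div_le_of_forall_sub_div_add_le {α β s : ℝ} (hβ : 0 < β)
    (h : ∀ γ > 0, (α - γ) / (β + γ) ≤ s) : α / β ≤ s := by
  have hcont : ContinuousAt (fun γ : ℝ => (α - γ) / (β + γ)) 0 :=
    (continuousAt_const.sub continuousAt_id).div (continuousAt_const.add continuousAt_id)
      (by simpa using hβ.ne')
  have hlim : Tendsto (fun γ : ℝ => (α - γ) / (β + γ)) (𝓝[>] 0) (𝓝 (α / β)) := by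
    simpa using hcont.tendsto.mono_left nhdsWithin_le_nhds
  exact le_of_tendsto hlim (eventually_nhdsWithin_of_forall h)

theorem bddAbove_sphereRatios {N : X → ℝ} {c C : ℝ} (hc : 0 < c)
    (hN : ∀ x, c * ‖x‖ ≤ N x ∧ N x ≤ C * ‖x‖) (Y : Submodule ℂ X) :
    BddAbove (sphereRatios N Y) := by
  refine ⟨C / c, ?_⟩
  rintro r ⟨x, -, y, -, hx, hy, rfl⟩
  have hNx := hN x
  have hNy := hN y
  simp only [hx, hy, mul_one] at hNx hNy
  exact div_le_div₀ (hc.le.trans hNx.1 |>.trans hNx.2) hNx.2 hc hNy.1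

theorem div_le_sSup_sphereRatios {N : X → ℝ} (hN : IsNormOn N) {c C : ℝ} (hc : 0 < c)
    (hNc : ∀ x, c * ‖x‖ ≤ N x ∧ N x ≤ C * ‖x‖) {A A' : Set X}
    (hA : A ⊆ sphere 0 1) (hA' : A' ⊆ sphere 0 1) (hinev : Inevitable A)
    (hinev' : Inevitable A') {α β : ℝ} (hβ : 0 < β) (hα : ∀ a ∈ A, α ≤ N a)
    (hβA' : ∀ b ∈ A', N b ≤ β) {Y : Submodule ℂ X} (hYc : IsClosed (Y : Set X))
    (hYfd : ¬ FiniteDimensional ℂ Y) : α / β ≤ sSup (sphereRatios N Y) := by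
  have hNu : UniformContinuous N := hN.uniformContinuous fun x => (hNc x).2
  refine div_le_of_forall_sub_div_add_le hβ fun γ hγ => ?_
  obtain ⟨x, hxY, hx, a, haA, hxa⟩ := hinev.exists_norm_eq_one_dist_lt hA hYc hYfd hNu hγ
  obtain ⟨y, hyY, hy, b, hbA', hyb⟩ := hinev'.exists_norm_eq_one_dist_lt hA' hYc hYfd hNu hγ
  rw [Real.dist_eq, abs_sub_lt_iff] at hxa hyb
  have hNx : α - γ ≤ N x := by linarith [hxa.2, hα a haA]
  have hNy : N y ≤ β + γ := by linarith [hyb.1, hβA' b hbA']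
  have hNy0 : 0 < N y := hc.trans_le (by simpa [hy] using (hNc y).1)
  calc (α - γ) / (β + γ) ≤ N x / N y := div_le_div₀ (hN.1 x) hNx hNy0 hNy
    _ ≤ sSup (sphereRatios N Y) :=
      le_csSup (bddAbove_sphereRatios hc hNc Y) ⟨x, hxY, y, hyY, hx, hy, rfl⟩

end

theorem renorming_is_distortion_general
    (X : Type*) [NormedAddCommGroup X] [NormedSpace ℂ X]
    (δ : ℝ) (hδ0 : 0 < δ)
    (A : ℕ → Set X) (B : ℕ → Set (X →L[ℂ] ℂ))
    (hA : ∀ j, A j ⊆ Metric.sphere (0 : X) 1)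
    (hB : ∀ j, B j ⊆ Metric.closedBall (0 : X →L[ℂ] ℂ) 1)
    (hinev : ∀ j, Inevitable (A j))
    (hbio1 : ∀ j, ∀ x ∈ A j, ∃ f ∈ B j, 1 - δ ≤ (f x).re)
    (hbio2 : ∀ j k, j ≠ k → ∀ x ∈ A j, ∀ f ∈ B k, ‖f x‖ ≤ δ)
    (ε : ℝ) (hε : 0 < ε) :
    IsNormOn (triNorm (B 1) ε) ∧
    (∀ x : X, ε * ‖x‖ ≤ triNorm (B 1) ε x ∧ triNorm (B 1) ε x ≤ (1 + ε) * ‖x‖) ∧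
    (∀ Y : Submodule ℂ X, IsClosed (Y : Set X) → ¬ FiniteDimensional ℂ Y →
      (1 + ε - δ) / (ε + δ) ≤ sSup {r : ℝ | ∃ x ∈ Y, ∃ y ∈ Y, ‖x‖ = 1 ∧ ‖y‖ = 1 ∧
        r = triNorm (B 1) ε x / triNorm (B 1) ε y}) ∧
    Distortable X ((1 + ε - δ) / (ε + δ)) := by
  have hnorm : IsNormOn (triNorm (B 1) ε) := isNormOn_triNorm (hB 1) hε
  have hbounds : ∀ x, ε * ‖x‖ ≤ triNorm (B 1) ε x ∧ triNorm (B 1) ε x ≤ (1 + ε) * ‖x‖ :=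
    fun x => ⟨mul_norm_le_triNorm x, triNorm_le (hB 1) x⟩
  have hlarge : ∀ a ∈ A 1, 1 + ε - δ ≤ triNorm (B 1) ε a := fun a ha => by
    obtain ⟨f, hf, hfa⟩ := hbio1 1 a ha
    have := add_re_le_triNorm (ε := ε) (hB 1) hf a
    rw [mem_sphere_zero_iff_norm.mp (hA 1 ha)] at this
    linarith
  have hsmall : ∀ b ∈ A 2, triNorm (B 1) ε b ≤ ε + δ := fun b hb => by
    have := triNorm_le_of_forall_norm_apply_le (ε := ε) hδ0.le (hbio2 2 1 (by norm_num) b hb)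
    rwa [mem_sphere_zero_iff_norm.mp (hA 2 hb), mul_one] at this
  have hdist : ∀ Y : Submodule ℂ X, IsClosed (Y : Set X) → ¬ FiniteDimensional ℂ Y →
      (1 + ε - δ) / (ε + δ) ≤ sSup (sphereRatios (triNorm (B 1) ε) Y) := fun Y hYc hYfd =>
    div_le_sSup_sphereRatios hnorm hε hbounds (hA 1) (hA 2) (hinev 1) (hinev 2)
      (by positivity) hlarge hsmall hYc hYfd
  exact ⟨hnorm, hbounds, hdist, _, hnorm, ⟨ε, hε, 1 + ε, by positivity, hbounds⟩, hdist⟩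

/-- Given an inevitable biorthogonal system `{A_j},{A_j*}` with
constant `0 < δ < 1/2` on an infinite-dimensional Banach space `X` and `ε > 0`,
the renorming `|||x||| = ε‖x‖ + sup{|⟨x*, x⟩| : x* ∈ A_1*}` is an equivalent
norm with `ε‖x‖ ≤ |||x||| ≤ (1+ε)‖x‖`, and on every infinite-dimensional closed
subspace the ratio `sup |||x|||/|||y|||` over unit vectors is at least
`(1 + ε - δ)/(ε + δ)`; in particular `X` is `(1 + ε - δ)/(ε + δ)`-distortable. -/
theorem renorming_is_distortion
    (X : Type*) [NormedAddCommGroup X] [NormedSpace ℂ X] [CompleteSpace X]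
    (hX : ¬ FiniteDimensional ℂ X)
    (δ : ℝ) (hδ0 : 0 < δ) (hδ : δ < 1 / 2)
    (A : ℕ → Set X) (B : ℕ → Set (X →L[ℂ] ℂ))
    (hA : ∀ j, A j ⊆ Metric.sphere (0 : X) 1)
    (hB : ∀ j, B j ⊆ Metric.closedBall (0 : X →L[ℂ] ℂ) 1)
    (hinev : ∀ j, Inevitable (A j))
    (hbio1 : ∀ j, ∀ x ∈ A j, ∃ f ∈ B j, 1 - δ ≤ (f x).re)
    (hbio2 : ∀ j k, j ≠ k → ∀ x ∈ A j, ∀ f ∈ B k, ‖f x‖ ≤ δ)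
    (ε : ℝ) (hε : 0 < ε) :
    IsNormOn (triNorm (B 1) ε) ∧
    (∀ x : X, ε * ‖x‖ ≤ triNorm (B 1) ε x ∧ triNorm (B 1) ε x ≤ (1 + ε) * ‖x‖) ∧
    (∀ Y : Submodule ℂ X, IsClosed (Y : Set X) → ¬ FiniteDimensional ℂ Y →
      (1 + ε - δ) / (ε + δ) ≤ sSup {r : ℝ | ∃ x ∈ Y, ∃ y ∈ Y, ‖x‖ = 1 ∧ ‖y‖ = 1 ∧
        r = triNorm (B 1) ε x / triNorm (B 1) ε y}) ∧
    Distortable X ((1 + ε - δ) / (ε + δ)) :=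
  renorming_is_distortion_general X δ hδ0 A B hA hB hinev hbio1 hbio2 ε hε
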